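/- With notation as above, if additionally κ lies in the interior of Δ₊ and π > 0 on the interior, then H(Λ) = ln((1/V)∫_{Δ₊} e^{−Λ(y−κ)} π dy) is proper: H(Λ) → +∞ as |Λ| → ∞, hence H attains a minimum on any closed convex cone in ℝⁿ, and (being strictly convex) the minimizer is unique. -/

import Mathlib

set_option maxHeartbeats 1000000

open MeasureTheory Metric Set Filter

private lemma exp_combo_le {x y a b : ℝ} (ha : 0 ≤ a) (hb : 0 ≤ b) (hab : a + b = 1) :
    Real.exp (a * x + b * y) ≤ a * Real.exp x + b * Real.exp y := by
  simpa [smul_eq_mul] using convexOn_exp.2 (Set.mem_univ x) (Set.mem_univ y) ha hb hab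

private lemma exp_combo_lt {x y a b : ℝ} (hxy : x ≠ y) (ha : 0 < a) (hb : 0 < b)
    (hab : a + b = 1) :
    Real.exp (a * x + b * y) < a * Real.exp x + b * Real.exp y := by
  simpa [smul_eq_mul] using strictConvexOn_exp.2 (Set.mem_univ x) (Set.mem_univ y) hxy ha hb hab

private lemma hyperplane_null {n : ℕ} (w : Fin n → ℝ) (hw : w ≠ 0) (c : ℝ) :
    volume {y : Fin n → ℝ | (∑ i, w i * y i) = c} = 0 := by
  classical
  obtain ⟨j, hj⟩ : ∃ j, w j ≠ 0 := by
    by_contra h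
    push_neg at h
    exact hw (funext fun i => h i)
  let φ : (Fin n → ℝ) →ₗ[ℝ] ℝ := ∑ i, w i • LinearMap.proj i
  have hφ : ∀ y, φ y = ∑ i, w i * y i := by
    intro y
    simp [φ, LinearMap.sum_apply, LinearMap.smul_apply, LinearMap.proj_apply, smul_eq_mul]
  let A : AffineSubspace ℝ (Fin n → ℝ) :=
    AffineSubspace.comap φ.toAffineMap (AffineSubspace.mk' c (⊥ : Submodule ℝ ℝ))
  have hmem : ∀ y, y ∈ A ↔ (∑ i, w i * y i) = c := by
    intro y
    constructor
    · intro hy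
      have : φ.toAffineMap y ∈ AffineSubspace.mk' c (⊥ : Submodule ℝ ℝ) := hy
      rw [AffineSubspace.mem_mk'] at this
      simpa [Submodule.mem_bot, vsub_eq_sub, sub_eq_zero, hφ y] using this
    · intro hy
      show φ.toAffineMap y ∈ AffineSubspace.mk' c (⊥ : Submodule ℝ ℝ)
      rw [AffineSubspace.mem_mk']
      simpa [Submodule.mem_bot, vsub_eq_sub, sub_eq_zero, hφ y] using hy
  have hAne : A ≠ ⊤ := by
    intro h
    have hy : ((c + 1) / w j) • (Pi.single j (1:ℝ) : Fin n → ℝ) ∈ A := h ▸ AffineSubspace.mem_top ℝ _ _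
    rw [hmem] at hy
    have hsum : (∑ i, w i * (((c + 1) / w j) • (Pi.single j (1:ℝ) : Fin n → ℝ)) i) = c + 1 := by
      have : ∀ i, w i * (((c + 1) / w j) • (Pi.single j (1:ℝ) : Fin n → ℝ)) i
          = if i = j then w j * ((c + 1) / w j) else 0 := by
        intro i
        by_cases hij : i = j <;> simp [hij, Pi.single_apply, mul_comm]
      rw [Finset.sum_congr rfl fun i _ => this i, Finset.sum_ite_eq' Finset.univ j]
      simp [mul_div_cancel₀, hj, mul_comm]
    rw [hsum] at hy
    linarith
  have hset : {y : Fin n → ℝ | (∑ i, w i * y i) = c} = (A : Set (Fin n → ℝ)) := by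
    ext y; simpa using (hmem y).symm
  rw [hset]
  exact Measure.addHaar_affineSubspace volume A hAne


/-- If moreover `κ ∈ int Δ₊` and `π > 0` on the interior, then
`H(Λ) = log((1/V) ∫_{Δ₊} e^{-⟨Λ, y-κ⟩} π dy)` is proper (`H(Λ) → +∞` as `|Λ| → ∞`) and
strictly convex; hence on any nonempty closed convex cone it attains a minimum at a unique
point. -/
theorem stmt_16 {n : ℕ} (S : Finset (Fin n → ℝ)) (Δ : Set (Fin n → ℝ))
    (hΔ : Δ = convexHull ℝ (S : Set (Fin n → ℝ)))
    (hintΔ : (interior Δ).Nonempty)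
    (π : (Fin n → ℝ) → ℝ) (hπc : Continuous π) (hπnn : ∀ y, 0 ≤ π y)
    (hπpos : ∀ y ∈ interior Δ, 0 < π y)
    (κ : Fin n → ℝ) (hκ : κ ∈ interior Δ)
    (V : ℝ) (hV : V = ∫ y in Δ, π y) (hVpos : 0 < V)
    (H : (Fin n → ℝ) → ℝ)
    (hH : ∀ Λ : Fin n → ℝ, H Λ =
      Real.log ((1 / V) * ∫ y in Δ, Real.exp (-(∑ i, Λ i * (y i - κ i))) * π y)) :
    Filter.Tendsto H (Bornology.cobounded (Fin n → ℝ)) Filter.atTop ∧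
    StrictConvexOn ℝ Set.univ H ∧
    ∀ C : Set (Fin n → ℝ), IsClosed C → Convex ℝ C →
      (∀ t : ℝ, 0 ≤ t → ∀ x ∈ C, t • x ∈ C) → C.Nonempty →
      ∃! Λ₀, Λ₀ ∈ C ∧ ∀ Λ ∈ C, H Λ₀ ≤ H Λ := by
  classical
  -- basic setup
  set g : (Fin n → ℝ) → (Fin n → ℝ) → ℝ :=
    fun Λ y => Real.exp (-(∑ i, Λ i * (y i - κ i))) * π y with hgdef
  set Z : (Fin n → ℝ) → ℝ := fun Λ => ∫ y in Δ, g Λ y with hZdef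
  have hΔc : IsCompact Δ := by
    rw [hΔ]; exact (S.finite_toSet).isCompact_convexHull ℝ
  have hΔm : MeasurableSet Δ := hΔc.isClosed.measurableSet
  obtain ⟨ε, hε, hballΔ⟩ : ∃ ε > 0, ball κ ε ⊆ Δ := by
    rcases Metric.mem_nhds_iff.mp (mem_interior_iff_mem_nhds.mp hκ) with ⟨ε, hε, hsub⟩
    exact ⟨ε, hε, hsub⟩
  have hballint : ball κ ε ⊆ interior Δ :=
    (Metric.isOpen_ball).subset_interior_iff.mpr hballΔ
  have hgcont : ∀ Λ, Continuous (g Λ) := by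
    intro Λ
    apply Continuous.mul _ hπc
    apply Real.continuous_exp.comp
    apply Continuous.neg
    exact continuous_finset_sum _ fun i _ =>
      (continuous_const.mul ((continuous_apply i).sub continuous_const))
  have hgnn : ∀ Λ y, 0 ≤ g Λ y := fun Λ y =>
    mul_nonneg (Real.exp_pos _).le (hπnn y)
  have hgint : ∀ Λ, IntegrableOn (g Λ) Δ := fun Λ =>
    (hgcont Λ).continuousOn.integrableOn_compact hΔc
  have hZpos : ∀ Λ, 0 < Z Λ := by
    intro Λ
    rw [hZdef]
    rw [setIntegral_pos_iff_support_of_nonneg_ae (Filter.Eventually.of_forall (hgnn Λ))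
      (hgint Λ)]
    have hsub : ball κ ε ⊆ Function.support (g Λ) ∩ Δ := by
      intro y hy
      refine ⟨?_, hballΔ hy⟩
      exact (mul_pos (Real.exp_pos _) (hπpos y (hballint hy))).ne'
    exact lt_of_lt_of_le (measure_ball_pos volume κ hε) (measure_mono hsub)
  have hHeq : ∀ Λ, H Λ = Real.log (Z Λ) - Real.log V := by
    intro Λ
    rw [hH Λ]
    rw [show (∫ y in Δ, Real.exp (-(∑ i, Λ i * (y i - κ i))) * π y) = Z Λ from rfl]
    rw [Real.log_mul (by positivity) (hZpos Λ).ne', one_div, Real.log_inv]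
    ring
  -- the exponent is affine in Λ
  have hcombo : ∀ (a b : ℝ) (Λ₁ Λ₂ : Fin n → ℝ) (y : Fin n → ℝ),
      (∑ i, (a • Λ₁ + b • Λ₂) i * (y i - κ i)) =
        a * (∑ i, Λ₁ i * (y i - κ i)) + b * (∑ i, Λ₂ i * (y i - κ i)) := by
    intro a b Λ₁ Λ₂ y
    rw [Finset.mul_sum, Finset.mul_sum, ← Finset.sum_add_distrib]
    exact Finset.sum_congr rfl fun i _ => by simp [Pi.add_apply, Pi.smul_apply]; ring
  -- strict convexity
  have hSC : StrictConvexOn ℝ Set.univ H := by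
    refine ⟨convex_univ, ?_⟩
    intro Λ₁ _ Λ₂ _ hne a b ha hb hab
    set α := Z Λ₁ with hα
    set β := Z Λ₂ with hβ
    have hαpos := hZpos Λ₁
    have hβpos := hZpos Λ₂
    set E := Real.exp (a * Real.log α + b * Real.log β) with hE
    have hEpos : 0 < E := Real.exp_pos _
    -- right-hand side function
    set R : (Fin n → ℝ) → ℝ := fun y => (E * a / α) * g Λ₁ y + (E * b / β) * g Λ₂ y with hR
    have hRint : IntegrableOn R Δ :=
      (((hgint Λ₁).const_mul _)).add (((hgint Λ₂)).const_mul _)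
    -- pointwise inequality
    have hpt : ∀ y, g (a • Λ₁ + b • Λ₂) y ≤ R y := by
      intro y
      set u := ∑ i, Λ₁ i * (y i - κ i) with hu
      set v := ∑ i, Λ₂ i * (y i - κ i) with hv
      have key := exp_combo_le (x := -u - Real.log α) (y := -v - Real.log β) ha.le hb.le hab
      have e1 : Real.exp (-u - Real.log α) = Real.exp (-u) / α := by
        rw [Real.exp_sub, Real.exp_log hαpos]
      have e2 : Real.exp (-v - Real.log β) = Real.exp (-v) / β := by
        rw [Real.exp_sub, Real.exp_log hβpos]
      have e3 : a * (-u - Real.log α) + b * (-v - Real.log β) =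
          (-(a * u + b * v)) - (a * Real.log α + b * Real.log β) := by ring
      rw [e1, e2, e3, Real.exp_sub] at key
      rw [div_le_iff₀ hEpos] at key
      have key2 := mul_le_mul_of_nonneg_right key (hπnn y)
      show Real.exp (-(∑ i, (a • Λ₁ + b • Λ₂) i * (y i - κ i))) * π y ≤ R y
      rw [hcombo a b Λ₁ Λ₂ y, ← hu, ← hv]
      refine le_trans key2 (le_of_eq ?_)
      show (a * (Real.exp (-u) / α) + b * (Real.exp (-v) / β)) * Real.exp (a * Real.log α + b * Real.log β) * π y
        = (E * a / α) * (Real.exp (-u) * π y) + (E * b / β) * (Real.exp (-v) * π y)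
      rw [← hE]; field_simp
    -- strict pointwise on a positive measure set
    have hwne : (Λ₂ - Λ₁ : Fin n → ℝ) ≠ 0 := sub_ne_zero.mpr (Ne.symm hne)
    set c : ℝ := Real.log α - Real.log β + ∑ i, (Λ₂ - Λ₁) i * κ i with hc
    set G : Set (Fin n → ℝ) := ball κ ε \ {y | (∑ i, (Λ₂ - Λ₁) i * y i) = c} with hG
    have hGpos : 0 < volume G := by
      rw [hG, measure_diff_null (hyperplane_null _ hwne c)]
      exact measure_ball_pos volume κ hε
    have hGstrict : ∀ y ∈ G, g (a • Λ₁ + b • Λ₂) y < R y := by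
      intro y hy
      obtain ⟨hyb, hyh⟩ := hy
      set u := ∑ i, Λ₁ i * (y i - κ i) with hu
      set v := ∑ i, Λ₂ i * (y i - κ i) with hv
      have hxy : (-u - Real.log α) ≠ (-v - Real.log β) := by
        intro hcontra
        apply hyh
        have : v - u = Real.log α - Real.log β := by linarith
        rw [Set.mem_setOf_eq]
        have hvu : v - u = ∑ i, (Λ₂ - Λ₁) i * (y i - κ i) := by
          rw [hu, hv, ← Finset.sum_sub_distrib]
          exact (Finset.sum_congr rfl fun i _ => by simp [Pi.sub_apply]; ring).symm
        have expand : (∑ i, (Λ₂ - Λ₁) i * (y i - κ i)) =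
            (∑ i, (Λ₂ - Λ₁) i * y i) - ∑ i, (Λ₂ - Λ₁) i * κ i := by
          rw [← Finset.sum_sub_distrib]
          exact Finset.sum_congr rfl fun i _ => by ring
        rw [hc]
        rw [hvu, expand] at this
        linarith
      have key := exp_combo_lt hxy ha hb hab
      have e1 : Real.exp (-u - Real.log α) = Real.exp (-u) / α := by
        rw [Real.exp_sub, Real.exp_log hαpos]
      have e2 : Real.exp (-v - Real.log β) = Real.exp (-v) / β := by
        rw [Real.exp_sub, Real.exp_log hβpos]
      have e3 : a * (-u - Real.log α) + b * (-v - Real.log β) =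
          (-(a * u + b * v)) - (a * Real.log α + b * Real.log β) := by ring
      rw [e1, e2, e3, Real.exp_sub] at key
      rw [div_lt_iff₀ hEpos] at key
      have hπy : 0 < π y := hπpos y (hballint hyb)
      have key2 := mul_lt_mul_of_pos_right key hπy
      show Real.exp (-(∑ i, (a • Λ₁ + b • Λ₂) i * (y i - κ i))) * π y < R y
      rw [hcombo a b Λ₁ Λ₂ y, ← hu, ← hv]
      refine lt_of_lt_of_le key2 (le_of_eq ?_)
      show (a * (Real.exp (-u) / α) + b * (Real.exp (-v) / β)) * Real.exp (a * Real.log α + b * Real.log β) * π y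
        = (E * a / α) * (Real.exp (-u) * π y) + (E * b / β) * (Real.exp (-v) * π y)
      rw [← hE]; field_simp
    -- integrate: strict inequality of integrals
    have hZlt : Z (a • Λ₁ + b • Λ₂) < ∫ y in Δ, R y := by
      have hDint : IntegrableOn (fun y => R y - g (a • Λ₁ + b • Λ₂) y) Δ :=
        hRint.sub (hgint _)
      have hpos : 0 < ∫ y in Δ, (R y - g (a • Λ₁ + b • Λ₂) y) := by
        rw [setIntegral_pos_iff_support_of_nonneg_ae
          (Filter.Eventually.of_forall fun y => sub_nonneg.mpr (hpt y)) hDint]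
        refine lt_of_lt_of_le hGpos (measure_mono ?_)
        intro y hy
        refine ⟨?_, hballΔ hy.1⟩
        exact ne_of_gt (sub_pos.mpr (hGstrict y hy))
      rw [integral_sub hRint (hgint (a • Λ₁ + b • Λ₂))] at hpos
      rw [hZdef]
      linarith
    have hRval : (∫ y in Δ, R y) = E := by
      rw [hR]
      rw [integral_add ((hgint Λ₁).const_mul _) ((hgint Λ₂).const_mul _),
        integral_const_mul, integral_const_mul]
      rw [show (∫ y in Δ, g Λ₁ y) = α from rfl, show (∫ y in Δ, g Λ₂ y) = β from rfl]
      field_simp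
      ring_nf
      have hα0 : α ≠ 0 := hαpos.ne'
      have hβ0 : β ≠ 0 := hβpos.ne'
      field_simp
      linarith
    rw [hRval] at hZlt
    have hlog := Real.log_lt_log (hZpos _) hZlt
    rw [hE, Real.log_exp] at hlog
    rw [hHeq, hHeq, hHeq]
    have hVsum : a * Real.log V + b * Real.log V = Real.log V := by
      rw [← add_mul, hab, one_mul]
    simp only [smul_eq_mul]
    nlinarith [hlog, hVsum]
  -- properness
  have htend : Filter.Tendsto H (Bornology.cobounded (Fin n → ℝ)) Filter.atTop := by
    by_cases hn : n = 0
    · subst hn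
      haveI : Subsingleton (Fin 0 → ℝ) := ⟨fun x y => funext fun i => absurd i.2 (by omega)⟩
      have hb : Bornology.IsBounded (Set.univ : Set (Fin 0 → ℝ)) :=
        Set.subsingleton_univ.finite.isBounded
      rw [Bornology.isBounded_univ] at hb
      haveI := hb
      rw [Bornology.cobounded_eq_bot]
      exact Filter.tendsto_bot
    · have hn' : 0 < n := Nat.pos_of_ne_zero hn
      haveI : Nonempty (Fin n) := ⟨⟨0, hn'⟩⟩
      set δ : ℝ := ε / (4 * n) with hδ
      have hnn : (1:ℝ) ≤ (n:ℝ) := by exact_mod_cast hn'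
      have hδpos : 0 < δ := by
        rw [hδ]; positivity
      have hδle : δ ≤ ε / 4 := by
        rw [hδ]
        apply div_le_div_of_nonneg_left hε.le (by norm_num)
        linarith
      obtain ⟨ym, hym, hmin⟩ := (isCompact_closedBall κ (3 * ε / 4)).exists_isMinOn
        (nonempty_closedBall.mpr (by positivity)) hπc.continuousOn
      set m : ℝ := π ym with hm
      have hmpos : 0 < m := by
        refine hπpos ym (hballint ?_)
        rw [mem_closedBall] at hym
        rw [mem_ball]
        linarith
      set cvol : ℝ := (volume (closedBall (0 : Fin n → ℝ) δ)).toReal with hcvol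
      have hcvolpos : 0 < cvol := by
        rw [hcvol]
        exact ENNReal.toReal_pos (measure_closedBall_pos volume _ hδpos).ne'
          measure_closedBall_lt_top.ne
      have hbound : ∀ Λ : Fin n → ℝ, Λ ≠ 0 →
          Real.log (m * cvol) + ε / 4 * ‖Λ‖ - Real.log V ≤ H Λ := by
        intro Λ hΛ
        obtain ⟨i₀, habs⟩ := Finite.exists_max fun i => |Λ i|
        have hnorm : ‖Λ‖ = |Λ i₀| := by
          refine le_antisymm ?_ ?_
          · refine (pi_norm_le_iff_of_nonneg (abs_nonneg _)).mpr fun i => ?_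
            rw [Real.norm_eq_abs]; exact habs i
          · rw [← Real.norm_eq_abs]; exact norm_le_pi_norm Λ i₀
        set s : ℝ := if 0 ≤ Λ i₀ then 1 else -1 with hs
        have hΛs : Λ i₀ * s = |Λ i₀| := by
          rw [hs]
          by_cases h : 0 ≤ Λ i₀
          · simp [h, abs_of_nonneg h]
          · push_neg at h
            simp only [if_neg (not_le.mpr h), abs_of_neg h]
            ring
        set u : Fin n → ℝ := Pi.single i₀ s with hu
        have hui : ∀ i, |u i| ≤ 1 := by
          intro i
          rw [hu, Pi.single_apply]
          by_cases hii : i = i₀ <;> simp [hii, hs] <;> split <;> norm_num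
        set z : Fin n → ℝ := κ - (ε / 2) • u with hz
        have hdistz : ∀ y ∈ closedBall z δ, dist y κ ≤ δ + ε / 2 := by
          intro y hy
          refine le_trans (dist_triangle y z κ) ?_
          have h2 : dist z κ ≤ ε / 2 := by
            rw [hz, dist_eq_norm, sub_sub_cancel_left, norm_neg, norm_smul,
              Real.norm_eq_abs, abs_of_pos (by positivity : (0:ℝ) < ε / 2)]
            have : ‖u‖ ≤ 1 := (pi_norm_le_iff_of_nonneg zero_le_one).mpr fun i => by
              rw [Real.norm_eq_abs]; exact hui i
            nlinarith
          have h1 : dist y z ≤ δ := mem_closedBall.mp hy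
          linarith
        have hBball : closedBall z δ ⊆ ball κ ε := by
          intro y hy
          rw [mem_ball]
          have := hdistz y hy
          linarith
        have hB3 : closedBall z δ ⊆ closedBall κ (3 * ε / 4) := by
          intro y hy
          rw [mem_closedBall]
          have := hdistz y hy
          linarith
        have hglb : ∀ y ∈ closedBall z δ, m * Real.exp (ε / 4 * ‖Λ‖) ≤ g Λ y := by
          intro y hy
          have hπy : m ≤ π y := hmin (hB3 hy)
          have hzterm : (∑ i, Λ i * (z i - κ i)) = -(ε / 2) * ‖Λ‖ := by
            have hterm : ∀ i, Λ i * (z i - κ i) =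
                if i = i₀ then Λ i₀ * (-(ε / 2) * s) else 0 := by
              intro i
              rw [hz]
              by_cases hii : i = i₀
              · subst hii; simp [hu, Pi.single_apply]; try ring
              · simp [hu, Pi.single_apply, hii]
            rw [Finset.sum_congr rfl fun i _ => hterm i, Finset.sum_ite_eq' Finset.univ i₀]
            simp only [Finset.mem_univ, if_true]
            rw [hnorm, ← hΛs]; ring
          have hyz : ∀ i, |y i - z i| ≤ δ := by
            intro i
            have h1 : dist (y i) (z i) ≤ dist y z := dist_le_pi_dist y z i
            rw [Real.dist_eq] at h1
            exact h1.trans (mem_closedBall.mp hy)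
          have habs2 : |∑ i, Λ i * (y i - z i)| ≤ ε / 4 * ‖Λ‖ := by
            calc |∑ i, Λ i * (y i - z i)| ≤ ∑ i, |Λ i * (y i - z i)| :=
                  Finset.abs_sum_le_sum_abs _ _
              _ ≤ ∑ _i : Fin n, ‖Λ‖ * δ := by
                  refine Finset.sum_le_sum fun i _ => ?_
                  rw [abs_mul]
                  refine mul_le_mul ?_ (hyz i) (abs_nonneg _) (norm_nonneg _)
                  rw [hnorm]; exact habs i
              _ = n * (‖Λ‖ * δ) := by
                  rw [Finset.sum_const, Finset.card_univ, Fintype.card_fin, nsmul_eq_mul]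
              _ = ε / 4 * ‖Λ‖ := by
                  have hne : (n:ℝ) ≠ 0 := Nat.cast_ne_zero.mpr hn
                  rw [hδ]
                  field_simp
          have hexp : ε / 4 * ‖Λ‖ ≤ -(∑ i, Λ i * (y i - κ i)) := by
            have hsplit : (∑ i, Λ i * (y i - κ i)) =
                (∑ i, Λ i * (y i - z i)) + ∑ i, Λ i * (z i - κ i) := by
              rw [← Finset.sum_add_distrib]
              exact Finset.sum_congr rfl fun i _ => by ring
            have h2 := (abs_le.mp habs2).2
            rw [hsplit, hzterm]
            linarith
          calc m * Real.exp (ε / 4 * ‖Λ‖)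
              ≤ π y * Real.exp (-(∑ i, Λ i * (y i - κ i))) :=
                mul_le_mul hπy (Real.exp_le_exp.mpr hexp) (Real.exp_pos _).le (hπnn y)
            _ = g Λ y := by rw [mul_comm]
        have hZge : m * cvol * Real.exp (ε / 4 * ‖Λ‖) ≤ Z Λ := by
          have h1 : (∫ y in closedBall z δ, g Λ y) ≤ Z Λ := by
            rw [hZdef]
            exact setIntegral_mono_set (hgint Λ) (Filter.Eventually.of_forall (hgnn Λ))
              (HasSubset.Subset.eventuallyLE (hBball.trans hballΔ))
          have h2 := setIntegral_ge_of_const_le_real measurableSet_closedBall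
            measure_closedBall_lt_top.ne hglb
            ((hgint Λ).mono_set (hBball.trans hballΔ))
          have hvol : (volume (closedBall z δ)).toReal = cvol := by
            rw [hcvol, Measure.addHaar_closedBall_center]
          rw [measureReal_def, hvol] at h2
          calc m * cvol * Real.exp (ε / 4 * ‖Λ‖)
              = m * Real.exp (ε / 4 * ‖Λ‖) * cvol := by ring
            _ ≤ ∫ y in closedBall z δ, g Λ y := h2
            _ ≤ Z Λ := h1
        rw [hHeq]
        have hlog := Real.log_le_log (by positivity) hZge
        rw [Real.log_mul (by positivity) (Real.exp_ne_zero _), Real.log_exp] at hlog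
        linarith
      have h0 : Filter.Tendsto (fun Λ : Fin n → ℝ => ε / 4 * ‖Λ‖)
          (Bornology.cobounded (Fin n → ℝ)) Filter.atTop :=
        tendsto_norm_cobounded_atTop.const_mul_atTop (by positivity)
      have h1 := Filter.tendsto_atTop_add_const_left (Bornology.cobounded (Fin n → ℝ))
        (Real.log (m * cvol) - Real.log V) h0
      refine Filter.tendsto_atTop_mono' _ ?_ h1
      filter_upwards [Bornology.eventually_ne_cobounded (0 : Fin n → ℝ)] with Λ hΛ
      have := hbound Λ hΛ
      linarith
  refine ⟨htend, hSC, ?_⟩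
  -- minimization over closed convex cones
  intro C hCclosed hCconv _ hCne
  obtain ⟨x₀, hx₀⟩ := hCne
  have hHcont : Continuous H := by
    rw [← continuousOn_univ]
    simpa using hSC.convexOn.continuousOn isOpen_univ
  obtain ⟨R0, hR0⟩ : ∃ R0 : ℝ, ∀ Λ : Fin n → ℝ, R0 ≤ ‖Λ‖ → H x₀ < H Λ := by
    have hev : ∀ᶠ Λ in Bornology.cobounded (Fin n → ℝ), H x₀ < H Λ :=
      htend.eventually_gt_atTop (H x₀)
    rw [← comap_norm_atTop, Filter.eventually_comap] at hev
    obtain ⟨R0, hR0⟩ := Filter.eventually_atTop.mp hev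
    exact ⟨R0, fun Λ h => hR0 ‖Λ‖ h Λ rfl⟩
  set R1 : ℝ := max R0 ‖x₀‖ with hR1
  set K : Set (Fin n → ℝ) := C ∩ closedBall 0 R1 with hK
  have hKcomp : IsCompact K := (isCompact_closedBall (0 : Fin n → ℝ) R1).inter_left hCclosed
  have hx₀K : x₀ ∈ K := ⟨hx₀, by
    rw [mem_closedBall, dist_zero_right]
    exact le_max_right _ _⟩
  obtain ⟨Λ₀, hΛ₀K, hΛ₀min⟩ := hKcomp.exists_isMinOn ⟨x₀, hx₀K⟩ hHcont.continuousOn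
  have hCmin : ∀ Λ ∈ C, H Λ₀ ≤ H Λ := by
    intro Λ hΛ
    by_cases hcase : ‖Λ‖ ≤ R1
    · exact hΛ₀min ⟨hΛ, by rwa [mem_closedBall, dist_zero_right]⟩
    · push_neg at hcase
      have h1 : H x₀ < H Λ := hR0 Λ ((le_max_left _ _).trans hcase.le)
      have h2 : H Λ₀ ≤ H x₀ := hΛ₀min hx₀K
      linarith
  refine ⟨Λ₀, ⟨hΛ₀K.1, hCmin⟩, ?_⟩
  rintro Λ₁ ⟨hΛ₁C, hΛ₁min⟩
  by_contra hne
  have heq : H Λ₁ = H Λ₀ := le_antisymm (hΛ₁min Λ₀ hΛ₀K.1) (hCmin Λ₁ hΛ₁C)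
  have hmid : ((1:ℝ)/2) • Λ₁ + ((1:ℝ)/2) • Λ₀ ∈ C :=
    hCconv hΛ₁C hΛ₀K.1 (by norm_num) (by norm_num) (by norm_num)
  have hlt := hSC.2 (Set.mem_univ Λ₁) (Set.mem_univ Λ₀) hne
    (by norm_num : (0:ℝ) < 1/2) (by norm_num : (0:ℝ) < 1/2) (by norm_num)
  have hge := hCmin _ hmid
  rw [heq] at hlt
  simp only [smul_eq_mul] at hlt
  linarith
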